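/- Let X be a smooth vector field on a manifold M vanishing on a submanifold K, and let S be a smooth function with X S = 0. If at each point p ∈ K the linearization of X transverse to K is invertible (as an endomorphism of the normal space), and S is locally constant on K, then every point of K is a critical point of S: dS vanishes on K. -/

import Mathlib

/-- let `X` be a smooth vector field (on the local model `E` of a manifold)
vanishing on a submanifold `K` (given with its tangent spaces `T p`, realized by curves
inside `K`), and let `S` be a smooth function with `X S = 0`.  If at each `p ∈ K` the
linearization of `X` transverse to `K` is invertible as an endomorphism of the normal
space `E ⧸ T p`, and `S` is locally constant on `K`, then every point of `K` is a
critical point of `S`: `dS` vanishes on `K`. -/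
theorem deriv_vanishes_on_K_of_transverse_nondegenerate
    {E : Type*} [NormedAddCommGroup E] [NormedSpace ℝ E]
    (X : E → E) (hX : ContDiff ℝ (⊤ : ℕ∞) X)
    (S : E → ℝ) (hS : ContDiff ℝ (⊤ : ℕ∞) S)
    (K : Set E)
    -- `X` vanishes on `K`
    (hXK : ∀ p ∈ K, X p = 0)
    -- `T p` is the tangent space of the submanifold `K` at `p`, realized by curves in `K`
    (T : E → Submodule ℝ E)
    (hT : ∀ p ∈ K, ∀ v ∈ T p, ∃ γ : ℝ → E,
      γ 0 = p ∧ HasDerivAt γ v 0 ∧ ∀ᶠ t in nhds (0 : ℝ), γ t ∈ K)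
    -- the linearization of `X` preserves `T p` ...
    (hT0 : ∀ p, ∀ hp : p ∈ K, T p ≤ (T p).comap (fderiv ℝ X p : E →ₗ[ℝ] E))
    -- ... and the induced transverse linearization on the normal space is invertible
    (hbij : ∀ p, ∀ hp : p ∈ K,
      Function.Bijective ((T p).mapQ (T p) (fderiv ℝ X p : E →ₗ[ℝ] E) (hT0 p hp)))
    -- `X S = 0`
    (hXS : ∀ x, fderiv ℝ S x (X x) = 0)
    -- `S` is locally constant on `K`
    (hSconst : ∀ p ∈ K, ∀ᶠ x in nhdsWithin p K, S x = S p) :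
    ∀ p ∈ K, fderiv ℝ S p = 0 := by
  intro p hp
  -- Step 1: dS p vanishes on T p
  have hker : ∀ v ∈ T p, fderiv ℝ S p v = 0 := by
    intro v hv
    obtain ⟨γ, hγ0, hγ', hγK⟩ := hT p hp v hv
    have hSd : HasDerivAt (fun t => S (γ t)) (fderiv ℝ S p v) 0 := by
      have h1 : HasFDerivAt S (fderiv ℝ S (γ 0)) (γ 0) :=
        ((hS.differentiable (by simp)) (γ 0)).hasFDerivAt
      have := h1.comp_hasDerivAt 0 hγ'
      rwa [hγ0] at this
    have hconst : ∀ᶠ t in nhds (0 : ℝ), S (γ t) = S p := by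
      have h1 : ∀ᶠ x in nhds p, x ∈ K → S x = S p :=
        eventually_nhdsWithin_iff.mp (hSconst p hp)
      have h2 : Filter.Tendsto γ (nhds 0) (nhds p) := by
        have := hγ'.continuousAt
        rwa [ContinuousAt, hγ0] at this
      filter_upwards [h2.eventually h1, hγK] with t ht htK using ht htK
    have hSd' : HasDerivAt (fun _ : ℝ => S p) (fderiv ℝ S p v) 0 := by
      apply hSd.congr_of_eventuallyEq
      filter_upwards [hconst] with t ht using ht.symm
    have := hSd'.unique (hasDerivAt_const 0 (S p))
    linarith
  -- Step 2: dS p ∘ fderiv X p = 0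
  have hA : ∀ v, fderiv ℝ S p (fderiv ℝ X p v) = 0 := by
    have hdS : Differentiable ℝ (fderiv ℝ S) :=
      (hS.fderiv_right (m := (⊤ : ℕ∞)) (by simp)).differentiable (by simp)
    have h1 : HasFDerivAt (fun x => fderiv ℝ S x (X x))
        ((fderiv ℝ S p).comp (fderiv ℝ X p)
          + (fderiv ℝ (fderiv ℝ S) p).flip (X p)) p :=
      (hdS p).hasFDerivAt.clm_apply ((hX.differentiable (by simp)) p).hasFDerivAt
    have h2 : HasFDerivAt (fun x => fderiv ℝ S x (X x)) (0 : E →L[ℝ] ℝ) p := by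
      have : (fun x => fderiv ℝ S x (X x)) = fun _ => (0 : ℝ) := funext hXS
      rw [this]; exact hasFDerivAt_const 0 p
    have h3 := h1.unique h2
    rw [hXK p hp] at h3
    intro v
    have := congrFun (congrArg DFunLike.coe h3) v
    simpa using this
  -- Step 3: combine via the quotient
  ext v
  obtain ⟨w, hw⟩ := (hbij p hp).2 (Submodule.Quotient.mk v)
  obtain ⟨u, rfl⟩ := Submodule.Quotient.mk_surjective _ w
  rw [Submodule.mapQ_apply] at hw
  have hmem : fderiv ℝ X p u - v ∈ T p := (Submodule.Quotient.eq _).mp hw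
  have h4 := hker _ hmem
  have h5 := hA u
  simp only [map_sub] at h4
  simp only [ContinuousLinearMap.zero_apply]
  linarith
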